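/- The higher Kloosterman sums are symmetric: K_{c,L}(n, r, n', r') = K_{c,L}(n', r', n, r) for every positive integer c, all n, n' ∈ ℤ, and all r, r' ∈ ℤ^N. -/
import Mathlib


open Matrix Complex

noncomputable section

/-- `e(t) := exp(2πit)`. -/
def eC (t : ℝ) : ℂ := Complex.exp (2 * Real.pi * Complex.I * (t : ℝ))

/-- The higher Kloosterman sum
`K_{c,L}(n,r,n',r') := e(−rᵀL⁻¹r'/(2c)) · Σ_{d ∈ (ℤ/c)ˣ, λ ∈ (ℤ/c)^N}
  e((d̄·(L[λ] + n + rᵀλ) + n'·d − r'ᵀλ)/c)`,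
where `d̄` is the inverse of `d` modulo `c` and `λ`, `d`, `d̄` are lifted via `ZMod.val`. -/
def kloosterman (N : ℕ) (c : ℕ) [NeZero c] (L : Matrix (Fin N) (Fin N) ℝ)
    (n : ℤ) (r : Fin N → ℤ) (n' : ℤ) (r' : Fin N → ℤ) : ℂ :=
  eC (-(∑ i, ∑ j, (r i : ℝ) * L⁻¹ i j * (r' j : ℝ)) / (2 * c)) *
    ∑ d : (ZMod c)ˣ, ∑ lam : Fin N → ZMod c,
      eC (((((d⁻¹ : (ZMod c)ˣ) : ZMod c).val : ℝ) *
            ((∑ i, ∑ j, ((lam i).val : ℝ) * L i j * ((lam j).val : ℝ))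
              + (n : ℝ) + ∑ i, (r i : ℝ) * ((lam i).val : ℝ))
          + (n' : ℝ) * (((d : ZMod c).val : ℝ))
          - ∑ i, (r' i : ℝ) * ((lam i).val : ℝ)) / c)

/- ### Auxiliary lemmas -/

lemma sum_split {N : ℕ} (f : Fin N → Fin N → ℝ) (hf : ∀ i j, f j i = f i j) :
    ∑ i, ∑ j, f i j = ∑ i, f i i + ∑ i, ∑ j ∈ Finset.Ioi i, 2 * f i j := by
  have h1 : ∀ i : Fin N, ∑ j, f i j
      = f i i + (∑ j ∈ Finset.Ioi i, f i j + ∑ j ∈ Finset.Iio i, f i j) := by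
    intro i
    rw [← Finset.sum_union (by simp [Finset.disjoint_left]; exact fun a h => h.le)]
    rw [← Finset.sum_insert (by simp)]
    apply Finset.sum_congr _ (fun _ _ => rfl)
    ext j
    simp only [Finset.mem_univ, Finset.mem_insert, Finset.mem_union, Finset.mem_Ioi,
      Finset.mem_Iio, true_iff]
    rcases lt_trichotomy i j with h|h|h
    · exact Or.inr (Or.inl h)
    · exact Or.inl h.symm
    · exact Or.inr (Or.inr h)
  have h2 : ∑ i, ∑ j ∈ Finset.Iio i, f i j = ∑ i, ∑ j ∈ Finset.Ioi i, f i j := by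
    rw [Finset.sum_comm' (t' := Finset.univ) (s' := fun j => Finset.Ioi j) (by simp)]
    exact Finset.sum_congr rfl fun i _ => Finset.sum_congr rfl fun j _ => hf i j
  have h3 : ∀ i : Fin N, ∑ j ∈ Finset.Ioi i, 2 * f i j
      = ∑ j ∈ Finset.Ioi i, f i j + ∑ j ∈ Finset.Ioi i, f i j := by
    intro i; rw [← Finset.sum_add_distrib]; exact Finset.sum_congr rfl fun _ _ => two_mul _
  simp only [h1, h3, Finset.sum_add_distrib, h2]

lemma eC_add_int (t : ℝ) (k : ℤ) : eC (t + k) = eC t := by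
  unfold eC
  push_cast
  rw [mul_add, Complex.exp_add]
  have h : Complex.exp (2 * Real.pi * Complex.I * (k : ℂ)) = 1 := by
    rw [show (2 * Real.pi * Complex.I * (k : ℂ))
        = (k : ℤ) * (2 * Real.pi * Complex.I) by push_cast; ring]
    exact Complex.exp_int_mul_two_pi_mul_I k
  rw [h, mul_one]

/-- The standard additive character of `ZMod c`. -/
def psi (c : ℕ) [NeZero c] (z : ZMod c) : ℂ := eC ((z.val : ℝ) / c)

lemma psi_intCast (c : ℕ) [NeZero c] (a : ℤ) : eC ((a : ℝ) / c) = psi c (a : ZMod c) := by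
  have hc : (c : ℝ) ≠ 0 := Nat.cast_ne_zero.mpr (NeZero.ne c)
  have hd : (c : ℤ) ∣ a - ((a : ZMod c).val : ℤ) := by
    rw [← ZMod.intCast_zmod_eq_zero_iff_dvd]
    push_cast
    simp [ZMod.natCast_val, ZMod.cast_id]
  obtain ⟨k, hk⟩ := hd
  have ha : (a : ℝ) = ((a : ZMod c).val : ℝ) + c * k := by
    have h : a = ((a : ZMod c).val : ℤ) + c * k := by linarith [hk]
    exact_mod_cast congrArg (Int.cast : ℤ → ℝ) h
  rw [ha, psi]
  rw [show (((a : ZMod c).val : ℝ) + c * k) / c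
      = ((a : ZMod c).val : ℝ) / c + k by field_simp]
  exact eC_add_int _ k

/-- The integral quadratic form attached to data `a` (diagonal) and `M` (doubled matrix). -/
def Qf {N : ℕ} {R : Type*} [CommRing R] (a : Fin N → R) (M : Fin N → Fin N → R)
    (v : Fin N → R) : R :=
  ∑ i, a i * v i ^ 2 + ∑ i, ∑ j ∈ Finset.Ioi i, M i j * v i * v j

lemma Qf_map {N : ℕ} {R S : Type*} [CommRing R] [CommRing S] (φ : R →+* S)
    (a : Fin N → R) (M : Fin N → Fin N → R) (v : Fin N → R) :
    φ (Qf a M v) = Qf (fun i => φ (a i)) (fun i j => φ (M i j)) (fun i => φ (v i)) := by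
  simp [Qf, map_sum, _root_.map_mul, map_pow]

lemma Qf_smul {N : ℕ} {R : Type*} [CommRing R] (a : Fin N → R) (M : Fin N → Fin N → R)
    (t : R) (v : Fin N → R) :
    Qf a M (fun i => t * v i) = t ^ 2 * Qf a M v := by
  unfold Qf
  rw [mul_add, Finset.mul_sum, Finset.mul_sum]
  congr 1
  · exact Finset.sum_congr rfl fun i _ => by ring
  · refine Finset.sum_congr rfl fun i _ => ?_
    rw [Finset.mul_sum]
    exact Finset.sum_congr rfl fun j _ => by ring

/-- The key reduction: the summand of the Kloosterman sum is the character `psi`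
evaluated at an element of `ZMod c` expressed algebraically in `d` and `lam`. -/
lemma key (N c : ℕ) [NeZero c] (L : Matrix (Fin N) (Fin N) ℝ)
    (a : Fin N → ℤ) (M : Fin N → Fin N → ℤ)
    (ha : ∀ i, L i i = (a i : ℝ)) (hM : ∀ i j, 2 * L i j = (M i j : ℝ))
    (hLs : ∀ i j, L j i = L i j)
    (n n' : ℤ) (r r' : Fin N → ℤ) (d : (ZMod c)ˣ) (lam : Fin N → ZMod c) :
    eC (((((d⁻¹ : (ZMod c)ˣ) : ZMod c).val : ℝ) *
            ((∑ i, ∑ j, ((lam i).val : ℝ) * L i j * ((lam j).val : ℝ))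
              + (n : ℝ) + ∑ i, (r i : ℝ) * ((lam i).val : ℝ))
          + (n' : ℝ) * (((d : ZMod c).val : ℝ))
          - ∑ i, (r' i : ℝ) * ((lam i).val : ℝ)) / c)
    = psi c (((d⁻¹ : (ZMod c)ˣ) : ZMod c) *
          (Qf (fun i => (a i : ZMod c)) (fun i j => (M i j : ZMod c)) lam
            + (n : ZMod c) + ∑ i, (r i : ZMod c) * lam i)
        + (n' : ZMod c) * ((d : ZMod c)) - ∑ i, (r' i : ZMod c) * lam i) := by
  set vl : Fin N → ℤ := fun i => ((lam i).val : ℤ) with hvl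
  have hQ : (∑ i, ∑ j, ((lam i).val : ℝ) * L i j * ((lam j).val : ℝ))
      = ((Qf a M vl : ℤ) : ℝ) := by
    rw [sum_split _ (fun i j => by rw [hLs i j]; ring)]
    rw [show ((Qf a M vl : ℤ) : ℝ) = (Int.castRingHom ℝ) (Qf a M vl) from rfl, Qf_map]
    simp only [eq_intCast, Int.cast_natCast]
    unfold Qf
    congr 1
    · exact Finset.sum_congr rfl fun i _ => by
        simp only [hvl]; rw [← ha i]; push_cast; ring
    · refine Finset.sum_congr rfl fun i _ => Finset.sum_congr rfl fun j _ => ?_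
      simp only [hvl]; rw [← hM i j]; push_cast; ring
  set A : ℤ := (((d⁻¹ : (ZMod c)ˣ) : ZMod c).val : ℤ) * (Qf a M vl + n + ∑ i, r i * vl i)
      + n' * (((d : ZMod c).val : ℤ)) - ∑ i, r' i * vl i with hA
  have hnum : ((((d⁻¹ : (ZMod c)ˣ) : ZMod c).val : ℝ) *
            ((∑ i, ∑ j, ((lam i).val : ℝ) * L i j * ((lam j).val : ℝ))
              + (n : ℝ) + ∑ i, (r i : ℝ) * ((lam i).val : ℝ))
          + (n' : ℝ) * (((d : ZMod c).val : ℝ))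
          - ∑ i, (r' i : ℝ) * ((lam i).val : ℝ)) = (A : ℝ) := by
    rw [hQ, hA]
    simp only [hvl]
    push_cast
    ring
  rw [hnum, psi_intCast]
  congr 1
  rw [hA]
  push_cast
  rw [show ((Qf a M vl : ℤ) : ZMod c) = (Int.castRingHom (ZMod c)) (Qf a M vl) from rfl, Qf_map]
  simp only [hvl, eq_intCast, Int.cast_natCast, ZMod.natCast_val, ZMod.cast_id,
    ZMod.intCast_zmod_cast, ZMod.intCast_cast]

/-- The higher Kloosterman sums are symmetric: `K_{c,L}(n,r,n',r') = K_{c,L}(n',r',n,r)`,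
for `L` the Gram matrix of a positive definite even lattice. -/
theorem kloosterman_symm (N : ℕ) (c : ℕ) [NeZero c] (hc : 0 < c)
    (L : Matrix (Fin N) (Fin N) ℝ) (hLpos : L.PosDef) (hLsymm : L.IsSymm)
    (hLdiag : ∀ i, ∃ m : ℤ, L i i = (m : ℝ))
    (hLhalf : ∀ i j, ∃ m : ℤ, 2 * L i j = (m : ℝ))
    (n n' : ℤ) (r r' : Fin N → ℤ) :
    kloosterman N c L n r n' r' = kloosterman N c L n' r' n r := by
  classical
  choose a ha using hLdiag
  choose M hM using hLhalf
  have hLs : ∀ i j, L j i = L i j := by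
    intro i j
    have h := hLsymm.eq
    calc L j i = Lᵀ i j := (Matrix.transpose_apply L i j).symm
    _ = L i j := by rw [h]
  have hinv : ∀ i j, L⁻¹ i j = L⁻¹ j i := by
    intro i j
    have h := Matrix.transpose_nonsing_inv L
    rw [hLsymm.eq] at h
    calc L⁻¹ i j = (L⁻¹)ᵀ j i := (Matrix.transpose_apply L⁻¹ j i).symm
    _ = L⁻¹ j i := by rw [h]
  have hpre : (∑ i, ∑ j, (r i : ℝ) * L⁻¹ i j * (r' j : ℝ))
      = ∑ i, ∑ j, (r' i : ℝ) * L⁻¹ i j * (r j : ℝ) := by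
    rw [Finset.sum_comm]
    refine Finset.sum_congr rfl fun i _ => Finset.sum_congr rfl fun j _ => ?_
    rw [hinv j i]; ring
  unfold kloosterman
  rw [hpre]
  congr 1
  refine Fintype.sum_equiv (Equiv.inv (ZMod c)ˣ) _ _ fun d => ?_
  refine Fintype.sum_equiv
    ⟨fun lam => fun i => -((d⁻¹ : (ZMod c)ˣ) : ZMod c) * lam i,
     fun lam => fun i => -((d : (ZMod c)ˣ) : ZMod c) * lam i, ?_, ?_⟩ _ _ fun lam => ?_
  · intro lam
    funext i
    simp only
    rw [show -((d : ZMod c)) * (-((d⁻¹ : (ZMod c)ˣ) : ZMod c) * lam i)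
        = ((d : ZMod c) * ((d⁻¹ : (ZMod c)ˣ) : ZMod c)) * lam i by ring,
      Units.mul_inv, one_mul]
  · intro lam
    funext i
    simp only
    rw [show -((d⁻¹ : (ZMod c)ˣ) : ZMod c) * (-((d : (ZMod c)ˣ) : ZMod c) * lam i)
        = (((d⁻¹ : (ZMod c)ˣ) : ZMod c) * (d : ZMod c)) * lam i by ring,
      Units.inv_mul, one_mul]
  · simp only [Equiv.inv_apply, Equiv.coe_fn_mk]
    rw [key N c L a M ha hM hLs n n' r r' d lam,
      key N c L a M ha hM hLs n' n r' r d⁻¹ (fun i => -((d⁻¹ : (ZMod c)ˣ) : ZMod c) * lam i)]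
    congr 1
    rw [inv_inv]
    rw [show (fun i => -((d⁻¹ : (ZMod c)ˣ) : ZMod c) * lam i)
        = (fun i => (-((d⁻¹ : (ZMod c)ˣ) : ZMod c)) * lam i) from rfl, Qf_smul]
    have hR : ∀ s : Fin N → ℤ,
        (∑ i, (s i : ZMod c) * (-((d⁻¹ : (ZMod c)ˣ) : ZMod c) * lam i))
        = -((d⁻¹ : (ZMod c)ˣ) : ZMod c) * ∑ i, (s i : ZMod c) * lam i := by
      intro s
      rw [Finset.mul_sum]
      exact Finset.sum_congr rfl fun i _ => by ring
    rw [hR r, hR r']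
    have hxy : ((d : ZMod c)) * ((d⁻¹ : (ZMod c)ˣ) : ZMod c) = 1 := Units.mul_inv d
    set x : ZMod c := (d : ZMod c)
    set y : ZMod c := ((d⁻¹ : (ZMod c)ˣ) : ZMod c)
    set Q : ZMod c := Qf (fun i => (a i : ZMod c)) (fun i j => (M i j : ZMod c)) lam
    set R : ZMod c := ∑ i, (r i : ZMod c) * lam i
    set R' : ZMod c := ∑ i, (r' i : ZMod c) * lam i
    linear_combination (R' - y * Q) * hxy
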